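/- arXiv:math/9911224 — 2 statements merged into one kernel-verified Lean document; each statement's English description precedes it below -/
import Mathlib

section
/- The space exp₂(S¹) of nonempty subsets of the circle of cardinality at most 2 is homeomorphic to the Möbius band, i.e., to the quotient of [0,1] × [0,1] by the identification (0,t) ∼ (1, 1−t) for all t ∈ [0,1]. -/
open TopologicalSpace

noncomputable section

/-- `ExpLe n X` is the space of nonempty subsets of `X` having at most `n` elements,
topologized by the Hausdorff distance on nonempty compact subsets of `X`
(finite subsets are compact). -/
abbrev ExpLe (n : ℕ) (X : Type*) [MetricSpace X] :=
  {s : NonemptyCompacts X // (s : Set X).Finite ∧ (s : Set X).ncard ≤ n}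

/-- The relation identifying `(0, t)` with `(1, 1 - t)` on `[0,1] × [0,1]`. -/
def mobiusRel (p q : unitInterval × unitInterval) : Prop :=
  (p.1 : ℝ) = 0 ∧ (q.1 : ℝ) = 1 ∧ (p.2 : ℝ) = 1 - (q.2 : ℝ)

/-- The Möbius band: the quotient of `[0,1] × [0,1]` by the equivalence relation
generated by `(0, t) ∼ (1, 1 - t)`, with the quotient topology. -/
abbrev MobiusBand := Quot mobiusRel

/-!
The map `(s, t) ↦ {exp(πi(s + t)), exp(πi(s - t))}` sends the square `[0,1] × [0,1]` continuously
onto `exp₂ S¹`, and two points of the square have the same image exactly when they are equal or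
identified by `(0, t) ∼ (1, 1 - t)`. It therefore descends to a continuous bijection from the
Möbius band, which is compact, onto `exp₂ S¹`, which is Hausdorff, hence to a homeomorphism.
-/

open Set Real

theorem Set.exists_eq_pair_of_ncard_le_two {α : Type*} {s : Set α} (hfin : s.Finite)
    (hne : s.Nonempty) (hcard : s.ncard ≤ 2) : ∃ x y, s = {x, y} := by
  have hpos : 0 < s.ncard := (Set.ncard_pos hfin).2 hne
  obtain hone | htwo : s.ncard = 1 ∨ s.ncard = 2 := by omega
  · obtain ⟨x, rfl⟩ := Set.ncard_eq_one.1 hone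
    exact ⟨x, x, (Set.pair_eq_singleton x).symm⟩
  · obtain ⟨x, y, -, rfl⟩ := Set.ncard_eq_two.1 htwo
    exact ⟨x, y, rfl⟩

theorem TopologicalSpace.NonemptyCompacts.coe_singleton_sup_singleton {X : Type*}
    [TopologicalSpace X] (x y : X) : (({x} ⊔ {y} : NonemptyCompacts X) : Set X) = {x, y} := by
  rw [NonemptyCompacts.coe_sup, NonemptyCompacts.coe_singleton, NonemptyCompacts.coe_singleton,
    Set.singleton_union]

namespace ExpLe

variable {X : Type*} [MetricSpace X]

def pair (x y : X) : ExpLe 2 X :=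
  ⟨{x} ⊔ {y}, by
    rw [NonemptyCompacts.coe_singleton_sup_singleton]
    exact ⟨(Set.finite_singleton y).insert x, (Set.ncard_insert_le x {y}).trans (by simp)⟩⟩

theorem coe_pair (x y : X) : ((pair x y : NonemptyCompacts X) : Set X) = {x, y} :=
  NonemptyCompacts.coe_singleton_sup_singleton x y

theorem pair_eq_pair_iff {x y x' y' : X} :
    pair x y = pair x' y' ↔ x = x' ∧ y = y' ∨ x = y' ∧ y = x' := by
  rw [← Set.pair_eq_pair_iff, ← coe_pair, ← coe_pair, Subtype.ext_iff, SetLike.coe_set_eq]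

theorem pair_comm (x y : X) : pair x y = pair y x :=
  pair_eq_pair_iff.2 (Or.inr ⟨rfl, rfl⟩)

theorem continuous_pair : Continuous fun p : X × X => pair p.1 p.2 :=
  (NonemptyCompacts.lipschitz_sup.continuous.comp
    (NonemptyCompacts.isometry_singleton.continuous.prodMap
      NonemptyCompacts.isometry_singleton.continuous)).subtype_mk _

theorem exists_eq_pair (s : ExpLe 2 X) : ∃ x y, s = pair x y := by
  obtain ⟨x, y, hxy⟩ := Set.exists_eq_pair_of_ncard_le_two s.2.1 s.1.nonempty s.2.2
  exact ⟨x, y, Subtype.ext (SetLike.coe_set_eq.1 (hxy.trans (coe_pair x y).symm))⟩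

end ExpLe

namespace Exp2Circle

def expTurn (x : ℝ) : Circle := Circle.exp (2 * π * x)

theorem continuous_expTurn : Continuous expTurn := by
  unfold expTurn
  fun_prop

theorem expTurn_eq_expTurn_iff {x y : ℝ} : expTurn x = expTurn y ↔ ∃ m : ℤ, x = y + m := by
  have hπ : (2 : ℝ) * π ≠ 0 := by positivity
  simp only [expTurn, Circle.exp_eq_exp]
  refine exists_congr fun m => ⟨fun h => mul_left_cancel₀ hπ ?_, fun h => ?_⟩
  · linear_combination h
  · rw [h]
    ring

theorem expTurn_sub_one (x : ℝ) : expTurn (x - 1) = expTurn x := by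
  rw [expTurn, mul_sub, mul_one, Circle.exp_sub_two_pi, expTurn]

theorem exists_mem_Ico_expTurn_eq (z : Circle) : ∃ a ∈ Ico (0 : ℝ) 1, expTurn a = z := by
  set x := Complex.arg z / (2 * π)
  refine ⟨Int.fract x, ⟨Int.fract_nonneg x, Int.fract_lt_one x⟩, ?_⟩
  have hx : expTurn x = z := by
    rw [expTurn, mul_div_cancel₀ _ (by positivity), Circle.exp_arg]
  exact (expTurn_eq_expTurn_iff.2 ⟨-⌊x⌋, by rw [Int.fract]; push_cast; ring⟩).trans hx

def squareToExp2 (p : unitInterval × unitInterval) : ExpLe 2 Circle :=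
  ExpLe.pair (expTurn ((p.1 + p.2) / 2)) (expTurn ((p.1 - p.2) / 2))

theorem continuous_squareToExp2 : Continuous squareToExp2 :=
  ExpLe.continuous_pair.comp <| .prodMk (continuous_expTurn.comp (by fun_prop))
    (continuous_expTurn.comp (by fun_prop))

theorem squareToExp2_eq_of_mobiusRel {p q : unitInterval × unitInterval} (h : mobiusRel p q) :
    squareToExp2 p = squareToExp2 q := by
  obtain ⟨hp₁, hq₁, hp₂⟩ := h
  have hsum : expTurn ((p.1 + p.2) / 2) = expTurn ((q.1 - q.2) / 2) := by
    congr 1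
    linarith
  have hdiff : expTurn ((p.1 - p.2) / 2) = expTurn ((q.1 + q.2) / 2) := by
    rw [← expTurn_sub_one ((q.1 + q.2) / 2)]
    congr 1
    linarith
  rw [squareToExp2, squareToExp2, hsum, hdiff, ExpLe.pair_comm]

theorem exists_squareToExp2_eq_pair {a b : ℝ} (hb : 0 ≤ b) (hba : b ≤ a) (ha : a < 1) :
    ∃ p, squareToExp2 p = ExpLe.pair (expTurn a) (expTurn b) := by
  by_cases hsum : a + b ≤ 1
  · refine ⟨(⟨a + b, by constructor <;> linarith⟩, ⟨a - b, by constructor <;> linarith⟩), ?_⟩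
    simp only [squareToExp2]
    congr 2 <;> ring
  -- `(a + b, a - b)` leaves the square, so use the representative `a - 1` and swap the points.
  · refine ⟨(⟨a + b - 1, by constructor <;> linarith⟩, ⟨b - a + 1, by constructor <;> linarith⟩),
      ?_⟩
    rw [squareToExp2, ExpLe.pair_comm, ← expTurn_sub_one a]
    congr 2 <;> simp only <;> ring

theorem squareToExp2_surjective : Function.Surjective squareToExp2 := by
  intro s
  obtain ⟨x, y, rfl⟩ := ExpLe.exists_eq_pair s
  obtain ⟨a, ⟨ha₀, ha₁⟩, rfl⟩ := exists_mem_Ico_expTurn_eq x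
  obtain ⟨b, ⟨hb₀, hb₁⟩, rfl⟩ := exists_mem_Ico_expTurn_eq y
  rcases le_total b a with hba | hab
  · exact exists_squareToExp2_eq_pair hb₀ hba ha₁
  · rw [ExpLe.pair_comm]
    exact exists_squareToExp2_eq_pair ha₀ hab hb₁

theorem eq_or_mobiusRel_of_squareToExp2_eq {p q : unitInterval × unitInterval}
    (h : squareToExp2 p = squareToExp2 q) : p = q ∨ mobiusRel p q ∨ mobiusRel q p := by
  obtain ⟨⟨s, hs₀, hs₁⟩, ⟨t, ht₀, ht₁⟩⟩ := p
  obtain ⟨⟨s', hs₀', hs₁'⟩, ⟨t', ht₀', ht₁'⟩⟩ := q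
  simp only [squareToExp2, ExpLe.pair_eq_pair_iff, expTurn_eq_expTurn_iff] at h
  simp only [mobiusRel, Prod.ext_iff, Subtype.ext_iff]
  rcases h with ⟨⟨m, hm⟩, ⟨n, hn⟩⟩ | ⟨⟨m, hm⟩, ⟨n, hn⟩⟩ <;>
  · have hm₁ : (-2 : ℤ) < m := by exact_mod_cast (by linarith : (-2 : ℝ) < m)
    have hm₂ : m < 2 := by exact_mod_cast (by linarith : (m : ℝ) < 2)
    have hn₁ : (-2 : ℤ) < n := by exact_mod_cast (by linarith : (-2 : ℝ) < n)
    have hn₂ : n < 2 := by exact_mod_cast (by linarith : (n : ℝ) < 2)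
    interval_cases m <;> interval_cases n <;> push_cast at hm hn
    all_goals first
      | (exfalso; linarith)
      | (left; constructor <;> linarith)
      | (right; left; refine ⟨?_, ?_, ?_⟩ <;> linarith)
      | (right; right; refine ⟨?_, ?_, ?_⟩ <;> linarith)

end Exp2Circle

open Exp2Circle in
/-- `exp₂ S¹` is homeomorphic to the Möbius band. -/
theorem exp2_circle_homeo_mobiusBand : Nonempty (ExpLe 2 Circle ≃ₜ MobiusBand) := by
  let toExp2 : MobiusBand → ExpLe 2 Circle :=
    Quot.lift squareToExp2 fun _ _ => squareToExp2_eq_of_mobiusRel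
  have hinj : Function.Injective toExp2 := by
    rintro ⟨p⟩ ⟨q⟩ h
    rcases eq_or_mobiusRel_of_squareToExp2_eq h with rfl | hpq | hqp
    · rfl
    · exact Quot.sound hpq
    · exact (Quot.sound hqp).symm
  have hsurj : Function.Surjective toExp2 := (Quot.surjective_lift _).2 squareToExp2_surjective
  have hcont : Continuous toExp2 := continuous_quot_lift _ continuous_squareToExp2
  exact ⟨(Continuous.homeoOfEquivCompactToT2
    (f := Equiv.ofBijective toExp2 ⟨hinj, hsurj⟩) hcont).symm⟩
end
end

section
/- Every lattice L in ℝ² admits a ℤ-basis (v, w) such that all three angles of the triangle with vertices 0, v, w are at most π/2; equivalently, there exist v, w ∈ L with L = ℤv + ℤw, v and w linearly independent, and ⟨v, w⟩ ≥ 0, ⟨v, v − w⟩ ≥ 0, ⟨w, w − v⟩ ≥ 0 (where ⟨·,·⟩ is the standard inner product on ℝ²). -/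
/-!
Choose a ℤ-basis `(v, w)` of `L` minimising `‖v‖ + ‖w‖`; one exists because `L` is discrete.
Since `(v, w - v)` and `(v - w, w)` are again ℤ-bases, minimality gives `‖w‖ ≤ ‖w - v‖` and
`‖v‖ ≤ ‖v - w‖`, which say that the angles at `v` and at `w` are at most `π/2`.
Replacing `w` by `-w` keeps the basis minimal, so we may also assume `0 ≤ ⟪v, w⟫`.
-/

open scoped RealInnerProductSpace

noncomputable section

/-- The Euclidean plane `ℝ²` with its standard inner product. -/
abbrev E2 := EuclideanSpace ℝ (Fin 2)

/-- `(v, w)` is a ℤ-basis of the subgroup `L` of `ℝ²`: `v, w` are linearly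
independent and `L = ℤv + ℤw`. -/
def IsZBasis (L : AddSubgroup E2) (v w : E2) : Prop :=
  LinearIndependent ℝ ![v, w] ∧ L = AddSubgroup.closure {v, w}

/-- `L` is a lattice in `ℝ²`: a subgroup generated by two linearly independent
vectors. -/
def IsLattice2 (L : AddSubgroup E2) : Prop :=
  ∃ v w, IsZBasis L v w

theorem real_inner_sub_nonneg_of_norm_le_norm_sub {F : Type*} [NormedAddCommGroup F]
    [InnerProductSpace ℝ F] {v w : F} (h : ‖w‖ ≤ ‖w - v‖) : 0 ≤ ⟪v, v - w⟫ := by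
  have hsq : ‖w‖ ^ 2 ≤ ‖w - v‖ ^ 2 := pow_le_pow_left₀ (norm_nonneg w) h 2
  rw [norm_sub_sq_real, real_inner_comm] at hsq
  rw [inner_sub_right, real_inner_self_eq_norm_sq]
  nlinarith [sq_nonneg ‖v‖]

namespace AddSubgroup

variable {G : Type*} [AddGroup G]

theorem left_mem_closure_pair (a b : G) : a ∈ closure {a, b} :=
  subset_closure (Set.mem_insert a _)

theorem right_mem_closure_pair (a b : G) : b ∈ closure {a, b} :=
  subset_closure (Set.mem_insert_of_mem a rfl)

theorem closure_pair_neg_right (a b : G) : closure {a, -b} = closure {a, b} := by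
  apply le_antisymm <;> refine (closure_le _).2 (Set.pair_subset (left_mem_closure_pair _ _) ?_)
  · exact neg_mem (right_mem_closure_pair a b)
  · simpa using neg_mem (right_mem_closure_pair a (-b))

theorem closure_pair_sub_right (a b : G) : closure {a, b - a} = closure {a, b} := by
  apply le_antisymm <;> refine (closure_le _).2 (Set.pair_subset (left_mem_closure_pair _ _) ?_)
  · exact sub_mem (right_mem_closure_pair a b) (left_mem_closure_pair a b)
  · simpa using add_mem (right_mem_closure_pair a (b - a)) (left_mem_closure_pair a _)

end AddSubgroup

namespace IsZBasis

variable {L : AddSubgroup E2} {v w : E2}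

theorem left_mem (h : IsZBasis L v w) : v ∈ L :=
  h.2 ▸ AddSubgroup.left_mem_closure_pair v w

theorem right_mem (h : IsZBasis L v w) : w ∈ L :=
  h.2 ▸ AddSubgroup.right_mem_closure_pair v w

theorem swap (h : IsZBasis L v w) : IsZBasis L w v :=
  ⟨LinearIndependent.pair_symm_iff.1 h.1, h.2.trans (by rw [Set.pair_comm])⟩

theorem neg_right (h : IsZBasis L v w) : IsZBasis L v (-w) :=
  ⟨LinearIndependent.pair_neg_right_iff.2 h.1,
    h.2.trans (AddSubgroup.closure_pair_neg_right v w).symm⟩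

theorem sub_right (h : IsZBasis L v w) : IsZBasis L v (w - v) := by
  refine ⟨?_, h.2.trans (AddSubgroup.closure_pair_sub_right v w).symm⟩
  have hw : w - v = (-1 : ℤ) • v + w := by module
  rw [hw, LinearIndependent.pair_add_smul_right_iff]
  exact h.1

theorem finite_inter_closedBall (h : IsZBasis L v w) (r : ℝ) :
    ((L : Set E2) ∩ Metric.closedBall 0 r).Finite := by
  let b := basisOfLinearIndependentOfCardEqFinrank h.1 (by simp)
  have hL : (L : Set E2) = Submodule.span ℤ (Set.range b) := by
    rw [coe_basisOfLinearIndependentOfCardEqFinrank, Matrix.range_cons_cons_empty,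
      ← Submodule.coe_toAddSubgroup, Submodule.span_int_eq_addSubgroupClosure, ← h.2]
  rw [hL, Set.inter_comm]
  exact ZSpan.setFinite_inter b Metric.isBounded_closedBall

end IsZBasis

def IsMinimalZBasis (L : AddSubgroup E2) (v w : E2) : Prop :=
  IsZBasis L v w ∧ ∀ v' w', IsZBasis L v' w' → ‖v‖ + ‖w‖ ≤ ‖v'‖ + ‖w'‖

theorem IsLattice2.exists_isMinimalZBasis {L : AddSubgroup E2} (hL : IsLattice2 L) :
    ∃ v w, IsMinimalZBasis L v w := by
  obtain ⟨v₀, w₀, h₀⟩ := hL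
  set r := ‖v₀‖ + ‖w₀‖
  let S := {p : E2 × E2 | IsZBasis L p.1 p.2 ∧ ‖p.1‖ + ‖p.2‖ ≤ r}
  have hS : S.Finite := by
    refine ((h₀.finite_inter_closedBall r).prod (h₀.finite_inter_closedBall r)).subset ?_
    rintro ⟨v, w⟩ ⟨h, hr⟩
    simp only [Set.mem_prod, Set.mem_inter_iff, SetLike.mem_coe, mem_closedBall_zero_iff]
    exact ⟨⟨h.left_mem, by linarith [norm_nonneg w]⟩, ⟨h.right_mem, by linarith [norm_nonneg v]⟩⟩
  obtain ⟨⟨v, w⟩, ⟨h, -⟩, hmin⟩ :=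
    Set.exists_min_image S (fun p => ‖p.1‖ + ‖p.2‖) hS ⟨(v₀, w₀), h₀, le_rfl⟩
  refine ⟨v, w, h, fun v' w' h' => ?_⟩
  by_cases hr' : ‖v'‖ + ‖w'‖ ≤ r
  · exact hmin (v', w') ⟨h', hr'⟩
  · linarith [hmin (v₀, w₀) ⟨h₀, le_rfl⟩]

namespace IsMinimalZBasis

variable {L : AddSubgroup E2} {v w : E2}

theorem swap (h : IsMinimalZBasis L v w) : IsMinimalZBasis L w v :=
  ⟨h.1.swap, fun v' w' h' => by linarith [h.2 w' v' h'.swap]⟩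

theorem neg_right (h : IsMinimalZBasis L v w) : IsMinimalZBasis L v (-w) :=
  ⟨h.1.neg_right, by simpa only [norm_neg] using h.2⟩

theorem norm_right_le_norm_sub (h : IsMinimalZBasis L v w) : ‖w‖ ≤ ‖w - v‖ := by
  linarith [h.2 v (w - v) h.1.sub_right]

theorem inner_sub_nonneg (h : IsMinimalZBasis L v w) : 0 ≤ ⟪v, v - w⟫ ∧ 0 ≤ ⟪w, w - v⟫ :=
  ⟨real_inner_sub_nonneg_of_norm_le_norm_sub h.norm_right_le_norm_sub,
    real_inner_sub_nonneg_of_norm_le_norm_sub h.swap.norm_right_le_norm_sub⟩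

end IsMinimalZBasis

/-- Every lattice `L` in `ℝ²` admits a ℤ-basis `(v, w)` such that all three angles
of the triangle with vertices `0, v, w` are at most `π/2`, i.e.
`⟨v, w⟩ ≥ 0`, `⟨v, v − w⟩ ≥ 0` and `⟨w, w − v⟩ ≥ 0`. -/
theorem exists_nonobtuse_zbasis (L : AddSubgroup E2) (hL : IsLattice2 L) :
    ∃ v w, IsZBasis L v w ∧ 0 ≤ ⟪v, w⟫ ∧ 0 ≤ ⟪v, v - w⟫ ∧ 0 ≤ ⟪w, w - v⟫ := by
  obtain ⟨v, w, h⟩ := hL.exists_isMinimalZBasis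
  rcases le_or_gt 0 ⟪v, w⟫ with hvw | hvw
  · exact ⟨v, w, h.1, hvw, h.inner_sub_nonneg⟩
  · refine ⟨v, -w, h.neg_right.1, ?_, h.neg_right.inner_sub_nonneg⟩
    rw [inner_neg_right]
    linarith
end
end
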